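/- Let Q, X̂ ∈ SE(3), let y₁,…,y_N ∈ ℝ⁴ be unit vectors and ẙ₁,…,ẙ_N ∈ ℝ⁴ unit vectors, and k₁,…,k_N > 0. Define ρ(Q, y) := Q⁻¹y/|Q⁻¹y| for y ≠ 0. Then the innovation term is right equivariant: Δ(X̂Q, (ρ(Q,y₁),…,ρ(Q,y_N))) = Δ(X̂, (y₁,…,y_N)). -/

import Mathlib

open Matrix BigOperators

noncomputable section

/-- The Euclidean norm of a vector in `ℝⁿ`. -/
def enormR {n : ℕ} (x : Fin n → ℝ) : ℝ := Real.sqrt (∑ i, x i ^ 2)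

/-- Normalization of a vector: `x / |x|`. -/
def nrm {n : ℕ} (x : Fin n → ℝ) : Fin n → ℝ := (enormR x)⁻¹ • x

/-- `R ∈ SO(3)`: rotation matrices. -/
def SO3 (R : Matrix (Fin 3) (Fin 3) ℝ) : Prop := Rᵀ * R = 1 ∧ R.det = 1

/-- The 4×4 block matrix `[[M, m],[0ᵀ, 0]]`. -/
def blk (M : Matrix (Fin 3) (Fin 3) ℝ) (m : Fin 3 → ℝ) : Matrix (Fin 4) (Fin 4) ℝ :=
  fun i j =>
    if h : (i : ℕ) < 3 then
      if h' : (j : ℕ) < 3 then M ⟨i, h⟩ ⟨j, h'⟩ else m ⟨i, h⟩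
    else 0

/-- The 4×4 block matrix `[[R, p],[0ᵀ, 1]]`. -/
def toSE3 (R : Matrix (Fin 3) (Fin 3) ℝ) (p : Fin 3 → ℝ) : Matrix (Fin 4) (Fin 4) ℝ :=
  fun i j =>
    if h : (i : ℕ) < 3 then
      if h' : (j : ℕ) < 3 then R ⟨i, h⟩ ⟨j, h'⟩ else p ⟨i, h⟩
    else if (j : ℕ) < 3 then 0 else 1

/-- The Special Euclidean group SE(3), as a subset of `ℝ^{4×4}`. -/
def SE3 : Set (Matrix (Fin 4) (Fin 4) ℝ) := {X | ∃ R p, SO3 R ∧ X = toSE3 R p}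

/-- The skew-symmetric matrix `ω_×` associated with the cross product by `ω`. -/
def crossMat (ω : Fin 3 → ℝ) : Matrix (Fin 3) (Fin 3) ℝ :=
  !![0, -ω 2, ω 1; ω 2, 0, -ω 0; -ω 1, ω 0, 0]

/-- The cross product on `ℝ³`. -/
def cross3 (u v : Fin 3 → ℝ) : Fin 3 → ℝ :=
  ![u 1 * v 2 - u 2 * v 1, u 2 * v 0 - u 0 * v 2, u 0 * v 1 - u 1 * v 0]

/-- The Lie algebra se(3), as a subset of `ℝ^{4×4}`. -/
def se3 : Set (Matrix (Fin 4) (Fin 4) ℝ) := {A | ∃ ω V, A = blk (crossMat ω) V}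

/-- The projection `P : ℝ^{4×4} → se(3)`:
`P([[M₁, m₂],[m₃ᵀ, m₄]]) = [[(M₁ − M₁ᵀ)/2, m₂],[0ᵀ, 0]]`. -/
def projP (M : Matrix (Fin 4) (Fin 4) ℝ) : Matrix (Fin 4) (Fin 4) ℝ :=
  fun i j =>
    if (i : ℕ) < 3 then (if (j : ℕ) < 3 then (M i j - M j i) / 2 else M i j) else 0

/-- The trace (Frobenius) inner product `⟨M₁, M₂⟩ = tr(M₁ᵀ M₂)`. -/
def mip (M₁ M₂ : Matrix (Fin 4) (Fin 4) ℝ) : ℝ := (M₁ᵀ * M₂).trace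

/-- First three components of a vector in `ℝ⁴`. -/
def vbar (x : Fin 4 → ℝ) : Fin 3 → ℝ := fun i => x (Fin.castSucc i)

/-- The vector `[v; c] ∈ ℝ⁴`. -/
def vec4 (v : Fin 3 → ℝ) (c : ℝ) : Fin 4 → ℝ := Fin.snoc v c

/-- The innovation term `Δ(X̂, Y) = −P(Σᵢ kᵢ (I₄ − eᵢeᵢᵀ) ẙᵢ eᵢᵀ)` where
`eᵢ = X̂yᵢ/|X̂yᵢ|`. -/
def innov {N : ℕ} (k : Fin N → ℝ) (ystar y : Fin N → Fin 4 → ℝ)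
    (Xh : Matrix (Fin 4) (Fin 4) ℝ) : Matrix (Fin 4) (Fin 4) ℝ :=
  -projP (∑ i, k i •
    ((1 - vecMulVec (nrm (Xh *ᵥ y i)) (nrm (Xh *ᵥ y i))) *
      vecMulVec (ystar i) (nrm (Xh *ᵥ y i))))

lemma enormR_eq_norm {n : ℕ} (x : Fin n → ℝ) :
    enormR x = ‖(WithLp.toLp 2 x : EuclideanSpace ℝ (Fin n))‖ := by
  simp [enormR, EuclideanSpace.norm_eq]

lemma enormR_smul {n : ℕ} (c : ℝ) (x : Fin n → ℝ) : enormR (c • x) = |c| * enormR x := by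
  simp only [enormR_eq_norm, WithLp.toLp_smul, norm_smul, Real.norm_eq_abs]

lemma enormR_pos {n : ℕ} {x : Fin n → ℝ} (hx : x ≠ 0) : 0 < enormR x := by
  simpa [enormR_eq_norm] using hx

lemma nrm_smul_of_pos {n : ℕ} {c : ℝ} (hc : 0 < c) (x : Fin n → ℝ) : nrm (c • x) = nrm x := by
  rw [nrm, nrm, enormR_smul, abs_of_pos hc, smul_smul]
  congr 1
  field_simp

lemma det_toSE3 (R : Matrix (Fin 3) (Fin 3) ℝ) (p : Fin 3 → ℝ) : (toSE3 R p).det = R.det := by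
  have hminor : (toSE3 R p).submatrix Fin.castSucc Fin.castSucc = R := by
    ext i j
    simp [toSE3]
  rw [det_succ_row _ (Fin.last 3), Fin.sum_univ_castSucc, Fin.succAbove_last, hminor]
  norm_num [toSE3]

lemma isUnit_det_of_mem_SE3 {X : Matrix (Fin 4) (Fin 4) ℝ} (hX : X ∈ SE3) : IsUnit X.det := by
  obtain ⟨R, p, ⟨-, hdet⟩, rfl⟩ := hX
  simp [det_toSE3, hdet]

/-- Moving `Q` from the point to the estimate only rescales `X̂ y` by a positive factor. -/
lemma nrm_mul_mulVec_nrm_inv_mulVec {n : ℕ} {Q : Matrix (Fin n) (Fin n) ℝ} (hQ : IsUnit Q.det)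
    (X : Matrix (Fin n) (Fin n) ℝ) {y : Fin n → ℝ} (hy : y ≠ 0) :
    nrm ((X * Q) *ᵥ nrm (Q⁻¹ *ᵥ y)) = nrm (X *ᵥ y) := by
  have hQy : Q⁻¹ *ᵥ y ≠ 0 := fun h =>
    hy (eq_zero_of_mulVec_eq_zero (isUnit_nonsing_inv_det Q hQ).ne_zero h)
  have hrescale : (X * Q) *ᵥ nrm (Q⁻¹ *ᵥ y) = (enormR (Q⁻¹ *ᵥ y))⁻¹ • (X *ᵥ y) := by
    rw [nrm, mulVec_smul, mulVec_mulVec, mul_assoc, mul_nonsing_inv Q hQ, mul_one]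
  rw [hrescale, nrm_smul_of_pos (inv_pos.mpr (enormR_pos hQy))]

theorem innovation_right_equivariant_general {N : ℕ}
    (Q Xh : Matrix (Fin 4) (Fin 4) ℝ) (hQ : Q ∈ SE3)
    (y ystar : Fin N → Fin 4 → ℝ)
    (hy : ∀ i, enormR (y i) = 1)
    (k : Fin N → ℝ) :
    innov k ystar (fun i => nrm (Q⁻¹ *ᵥ y i)) (Xh * Q) = innov k ystar y Xh := by
  have hy0 : ∀ i, y i ≠ 0 := fun i h => by simpa [h, enormR] using hy i
  simp only [innov, nrm_mul_mulVec_nrm_inv_mulVec (isUnit_det_of_mem_SE3 hQ) Xh (hy0 _)]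

/-- the innovation term is right equivariant:
`Δ(X̂Q, (ρ(Q,y₁),…,ρ(Q,y_N))) = Δ(X̂, (y₁,…,y_N))` with `ρ(Q,y) = Q⁻¹y/|Q⁻¹y|`. -/
theorem innovation_right_equivariant {N : ℕ}
    (Q Xh : Matrix (Fin 4) (Fin 4) ℝ) (hQ : Q ∈ SE3) (hXh : Xh ∈ SE3)
    (y ystar : Fin N → Fin 4 → ℝ)
    (hy : ∀ i, enormR (y i) = 1) (hystar : ∀ i, enormR (ystar i) = 1)
    (k : Fin N → ℝ) (hk : ∀ i, 0 < k i) :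
    innov k ystar (fun i => nrm (Q⁻¹ *ᵥ y i)) (Xh * Q) = innov k ystar y Xh :=
  innovation_right_equivariant_general Q Xh hQ y ystar hy k
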